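/- arXiv:math/0603629 — 4 statements merged into one kernel-verified Lean document; each statement's English description precedes it below -/
import Mathlib

section
/- For γ ∈ (0,1) and positive integers p, q, let I_{γ,n} be the set of sequences (i₀,…,i_{n−1}) ∈ {1,…,p+q}^n such that #{0 ≤ j < n : i_j ≤ q} > γ·n, and let c_γ = limsup_{n→∞} (1/n)·log(#I_{γ,n}). Then c_γ → log q as γ → 1. -/
/-!
Call a letter good if it satisfies `P` (in the theorem: one of the first `q` symbols), and let
`g` and `b` be the numbers of good and bad letters. Words made only of good letters give
`gⁿ ≤ #I_{γ,n}`. Conversely, weighting each bad letter by `s ∈ (0, 1]`, the total weight of all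
words is `(g + s b)ⁿ`, while a word of `I_{γ,n}` has fewer than `(1 - γ) n` bad letters and so
weight at least `s^((1 - γ) n)`. Hence `log g ≤ c_γ ≤ log (g + s b) - (1 - γ) log s`, and the
choice `s = 1 - γ` makes the upper bound tend to `log g` because `x log x → 0` as `x → 0`.
-/

open Filter Finset Real Topology

section FrequentWords

variable {α : Type*} [Fintype α] (P : α → Prop) [DecidablePred P]

noncomputable def frequentWords (γ : ℝ) (n : ℕ) : Finset (Fin n → α) :=
  univ.filter fun w => γ * n < (#(univ.filter fun j => P (w j)) : ℝ)

noncomputable def frequentWordsRate (γ : ℝ) (n : ℕ) : ℝ :=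
  (1 / n : ℝ) * log #(frequentWords P γ n)

noncomputable def frequentWordsGrowth (γ : ℝ) : ℝ :=
  limsup (frequentWordsRate P γ) atTop

variable {P}

lemma pow_card_filter_le_card_frequentWords {γ : ℝ} (hγ : γ < 1) {n : ℕ} (hn : 0 < n) :
    #(univ.filter P) ^ n ≤ #(frequentWords P γ n) := by
  calc #(univ.filter P) ^ n = #(Fintype.piFinset fun _ : Fin n => univ.filter P) := by
        simp [Fintype.card_piFinset]
    _ ≤ #(frequentWords P γ n) := card_le_card fun w hw => by
        have hgood : ∀ j, P (w j) := by simpa [Fintype.mem_piFinset] using hw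
        have : γ * n < n := mul_lt_of_lt_one_left (by exact_mod_cast hn) hγ
        simpa [frequentWords, hgood] using this

lemma card_frequentWords_mul_rpow_le {γ s : ℝ} (hs0 : 0 < s) (hs1 : s ≤ 1) (n : ℕ) :
    #(frequentWords P γ n) * s ^ ((1 - γ) * n) ≤
      (#(univ.filter P) + s * #(univ.filter fun a => ¬P a)) ^ n := by
  set weight : α → ℝ := fun a => if P a then 1 else s
  have hweight_sum : ∑ a, weight a = #(univ.filter P) + s * #(univ.filter fun a => ¬P a) := by
    simp [weight, sum_ite, mul_comm]
  have hword_weight (w : Fin n → α) :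
      ∏ j, weight (w j) = s ^ #(univ.filter fun j => ¬P (w j)) := by
    simp [weight, prod_ite]
  have hfrequent_weight : ∀ w ∈ frequentWords P γ n, s ^ ((1 - γ) * n) ≤ ∏ j, weight (w j) := by
    intro w hw
    have hfreq : γ * n < #(univ.filter fun j => P (w j)) := (mem_filter.1 hw).2
    have hsplit := card_filter_add_card_filter_not (s := univ) fun j => P (w j)
    rw [card_univ, Fintype.card_fin] at hsplit
    have hbad : (#(univ.filter fun j => ¬P (w j)) : ℝ) ≤ (1 - γ) * n := by
      have : (#(univ.filter fun j => P (w j)) : ℝ) + #(univ.filter fun j => ¬P (w j)) = n := by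
        exact_mod_cast hsplit
      linarith
    rw [hword_weight, ← rpow_natCast]
    exact rpow_le_rpow_of_exponent_ge hs0 hs1 hbad
  have hweight_nonneg (a : α) : 0 ≤ weight a := by
    simp only [weight]; split_ifs <;> linarith
  calc #(frequentWords P γ n) * s ^ ((1 - γ) * n)
        = ∑ _w ∈ frequentWords P γ n, s ^ ((1 - γ) * n) := by rw [sum_const, nsmul_eq_mul]
    _ ≤ ∑ w ∈ frequentWords P γ n, ∏ j, weight (w j) := sum_le_sum hfrequent_weight
    _ ≤ ∑ w : Fin n → α, ∏ j, weight (w j) :=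
        sum_le_univ_sum_of_nonneg fun w => prod_nonneg fun j _ => hweight_nonneg (w j)
    _ = _ := by rw [← Fintype.sum_pow, hweight_sum]

lemma log_card_filter_le_frequentWordsRate (hP : 0 < #(univ.filter P)) {γ : ℝ} (hγ : γ < 1)
    {n : ℕ} (hn : 0 < n) : log #(univ.filter P) ≤ frequentWordsRate P γ n := by
  have hpow : ((#(univ.filter P) : ℝ)) ^ n ≤ #(frequentWords P γ n) := by
    exact_mod_cast pow_card_filter_le_card_frequentWords hγ hn
  have hlog := log_le_log (by positivity) hpow
  rw [log_pow] at hlog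
  rw [frequentWordsRate, one_div_mul_eq_div, le_div_iff₀ (by exact_mod_cast hn), mul_comm]
  exact hlog

lemma frequentWordsRate_le (hP : 0 < #(univ.filter P)) {γ s : ℝ} (hγ : γ < 1) (hs0 : 0 < s)
    (hs1 : s ≤ 1) {n : ℕ} (hn : 0 < n) :
    frequentWordsRate P γ n ≤
      log (#(univ.filter P) + s * #(univ.filter fun a => ¬P a)) - (1 - γ) * log s := by
  have hcard : (0 : ℝ) < #(frequentWords P γ n) := by
    exact_mod_cast (pow_pos hP n).trans_le (pow_card_filter_le_card_frequentWords hγ hn)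
  have hlog := log_le_log (by positivity) (card_frequentWords_mul_rpow_le (P := P) hs0 hs1 n)
  rw [log_mul hcard.ne' (rpow_pos_of_pos hs0 _).ne', log_rpow hs0, log_pow] at hlog
  have hn' : (0 : ℝ) < n := by exact_mod_cast hn
  rw [frequentWordsRate, one_div_mul_eq_div, div_le_iff₀ hn']
  linarith

lemma log_card_filter_le_frequentWordsGrowth (hP : 0 < #(univ.filter P)) {γ : ℝ} (hγ : γ < 1) :
    log #(univ.filter P) ≤ frequentWordsGrowth P γ :=
  le_limsup_of_frequently_le
    (((eventually_gt_atTop 0).mono fun _ hn =>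
      log_card_filter_le_frequentWordsRate hP hγ hn).frequently)
    (isBoundedUnder_of_eventually_le
      ((eventually_gt_atTop 0).mono fun _ hn => frequentWordsRate_le hP hγ one_pos le_rfl hn))

lemma frequentWordsGrowth_le (hP : 0 < #(univ.filter P)) {γ s : ℝ} (hγ : γ < 1) (hs0 : 0 < s)
    (hs1 : s ≤ 1) :
    frequentWordsGrowth P γ ≤
      log (#(univ.filter P) + s * #(univ.filter fun a => ¬P a)) - (1 - γ) * log s :=
  limsup_le_of_le
    (isCoboundedUnder_le_of_eventually_le atTop
      ((eventually_gt_atTop 0).mono fun _ hn => log_card_filter_le_frequentWordsRate hP hγ hn))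
    ((eventually_gt_atTop 0).mono fun _ hn => frequentWordsRate_le hP hγ hs0 hs1 hn)

end FrequentWords

lemma tendsto_log_add_sub_mul_log (a b : ℝ) (ha : 0 < a) :
    Tendsto (fun γ : ℝ => log (a + (1 - γ) * b) - (1 - γ) * log (1 - γ)) (𝓝 1) (𝓝 (log a)) := by
  have hlin : Tendsto (fun γ : ℝ => 1 - γ) (𝓝 1) (𝓝 0) :=
    (continuous_const.sub continuous_id).tendsto' 1 0 (sub_self 1)
  have h := ((tendsto_const_nhds (x := a)).add (hlin.mul_const b)).log (by simpa using ha.ne')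
    |>.sub ((continuous_mul_log.tendsto 0).comp hlin)
  simpa using h

theorem itinerary_growth_rate_general (p q : ℕ) (hq : 0 < q) :
    Filter.Tendsto
      (fun γ : ℝ => Filter.atTop.limsup (fun n : ℕ =>
        (1 / n : ℝ) * Real.log
          ((Finset.univ.filter (fun w : Fin n → Fin (p + q) =>
            γ * n < ((Finset.univ.filter (fun j : Fin n => (w j : ℕ) < q)).card : ℝ))).card)))
      (nhdsWithin 1 (Set.Ioo 0 1)) (nhds (Real.log q)) := by
  change Tendsto (frequentWordsGrowth fun i : Fin (p + q) => (i : ℕ) < q) _ _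
  have hgood : #(univ.filter fun i : Fin (p + q) => (i : ℕ) < q) = q := by
    simp [Fin.card_filter_val_lt]
  have hbad : #(univ.filter fun i : Fin (p + q) => ¬(i : ℕ) < q) = p := by
    have := card_filter_add_card_filter_not (s := univ) fun i : Fin (p + q) => (i : ℕ) < q
    rw [hgood, card_univ, Fintype.card_fin] at this
    omega
  have hP : 0 < #(univ.filter fun i : Fin (p + q) => (i : ℕ) < q) := by rwa [hgood]
  refine tendsto_of_tendsto_of_tendsto_of_le_of_le' tendsto_const_nhds
    ((tendsto_log_add_sub_mul_log q p (by exact_mod_cast hq)).mono_left nhdsWithin_le_nhds)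
    ?_ ?_ <;> filter_upwards [self_mem_nhdsWithin] with γ ⟨hγ0, hγ1⟩
  · simpa [hgood] using log_card_filter_le_frequentWordsGrowth hP hγ1
  · simpa only [hgood, hbad] using
      frequentWordsGrowth_le hP hγ1 (s := 1 - γ) (by linarith) (by linarith)

theorem itinerary_growth_rate (p q : ℕ) (hp : 0 < p) (hq : 0 < q) :
    Filter.Tendsto
      (fun γ : ℝ => Filter.atTop.limsup (fun n : ℕ =>
        (1 / n : ℝ) * Real.log
          ((Finset.univ.filter (fun w : Fin n → Fin (p + q) =>
            γ * n < ((Finset.univ.filter (fun j : Fin n => (w j : ℕ) < q)).card : ℝ))).card)))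
      (nhdsWithin 1 (Set.Ioo 0 1)) (nhds (Real.log q)) :=
  itinerary_growth_rate_general p q hq
end

section
/- Let f : M → M be a measurable transformation on a measurable space, μ an f-invariant probability, and ν a probability with a Jacobian J_ν f with respect to f. Suppose L is a bounded measurable function with L_φ*ν = λν for the transfer operator with Hölder potential φ, where f is a local diffeomorphism with each point having exactly k preimages. Then the Jacobian of ν with respect to f satisfies J_ν f = λ·e^{−φ} ν-almost everywhere; i.e., for every measurable set A on which f is injective, ν(f(A)) = ∫_A λ·e^{−φ(x)} dν(x). -/
/-!
Write `bᵢ` for the inverse branches of `f`. Testing the eigen-equation `L_φ* ν = λ ν` against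
continuous functions identifies two finite Borel measures, so it holds for every nonnegative
measurable test function. Testing it against `g = 𝟙_A e^{-φ}` gives
`λ ∫_A e^{-φ} dν = ∫ #{i | bᵢ x ∈ A} dν(x)`, and when `f` is injective on `A` the count
`#{i | bᵢ x ∈ A}` is exactly the indicator of `f(A)`.
-/

open MeasureTheory Function
open scoped ENNReal NNReal

namespace TransferOperator

section Branches

variable {M R : Type*} {k : ℕ} {f : M → M} {branch : Fin k → M → M}

theorem image_eq_iUnion_preimage_branch (hbr : ∀ i x, f (branch i x) = x)
    (hfiber : ∀ x y, f y = x → ∃ i, branch i x = y) (A : Set M) :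
    f '' A = ⋃ i, branch i ⁻¹' A := by
  ext x
  constructor
  · rintro ⟨y, hy, rfl⟩
    obtain ⟨i, hi⟩ := hfiber (f y) y rfl
    exact Set.mem_iUnion.2 ⟨i, show branch i (f y) ∈ A by rwa [hi]⟩
  · intro hx
    obtain ⟨i, hi⟩ := Set.mem_iUnion.1 hx
    exact ⟨branch i x, hi, hbr i x⟩

theorem sum_indicator_branch_eq_indicator_image [AddCommMonoidWithOne R]
    (hbr : ∀ i x, f (branch i x) = x) (hfiber : ∀ x y, f y = x → ∃ i, branch i x = y)
    (hinj : ∀ x, Injective fun i => branch i x) {A : Set M} (hA : Set.InjOn f A) (x : M) :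
    ∑ i, A.indicator 1 (branch i x) = (f '' A).indicator (1 : M → R) x := by
  by_cases hx : x ∈ f '' A
  · obtain ⟨y, hy, rfl⟩ := hx
    obtain ⟨i, hi⟩ := hfiber (f y) y rfl
    have hother : ∀ j ≠ i, branch j (f y) ∉ A := fun j hji hj =>
      hji <| hinj _ <| (hA hj hy (hbr j _)).trans hi.symm
    rw [Finset.sum_eq_single i (fun j _ hji => Set.indicator_of_notMem (hother j hji) _)
      (by simp), hi, Set.indicator_of_mem hy, Set.indicator_of_mem (Set.mem_image_of_mem f hy)]
    rfl
  · rw [Set.indicator_of_notMem hx]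
    refine Finset.sum_eq_zero fun i _ => Set.indicator_of_notMem (fun hi => hx ?_) _
    exact ⟨branch i x, hi, hbr i x⟩

end Branches

variable {M : Type*} [MeasurableSpace M] {k : ℕ}

/-- The measure `L_φ* ν`, written through the inverse branches `branch i` of `f`. -/
noncomputable def dualMeasure (branch : Fin k → M → M) (φ : M → ℝ) (ν : Measure M) : Measure M :=
  ∑ i, (ν.map (branch i)).withDensity fun y => ENNReal.ofReal (Real.exp (φ y))

theorem lintegral_dualMeasure {branch : Fin k → M → M} (hb : ∀ i, Measurable (branch i))
    {φ : M → ℝ} (hφ : Measurable φ) (ν : Measure M) {g : M → ℝ≥0∞} (hg : Measurable g) :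
    ∫⁻ y, g y ∂dualMeasure branch φ ν
      = ∫⁻ x, ∑ i, ENNReal.ofReal (Real.exp (φ (branch i x))) * g (branch i x) ∂ν := by
  have hw : Measurable fun y => ENNReal.ofReal (Real.exp (φ y)) := by fun_prop
  rw [dualMeasure, lintegral_finsetSum_measure, lintegral_finsetSum]
  · refine Finset.sum_congr rfl fun i _ => ?_
    rw [lintegral_withDensity_eq_lintegral_mul _ hw hg, lintegral_map (hw.mul hg) (hb i)]
    rfl
  · exact fun i _ => (hw.comp (hb i)).mul (hg.comp (hb i))

theorem dualMeasure_eq_smul [TopologicalSpace M] [CompactSpace M]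
    [TopologicalSpace.PseudoMetrizableSpace M] [BorelSpace M]
    {branch : Fin k → M → M} (hb : ∀ i, Continuous (branch i)) {φ : M → ℝ} (hφ : Continuous φ)
    (ν : Measure M) [IsFiniteMeasure ν] {lam : ℝ} (hlam : 0 ≤ lam)
    (heig : ∀ g : M → ℝ, Continuous g →
      ∫ x, (∑ i, Real.exp (φ (branch i x)) * g (branch i x)) ∂ν = lam * ∫ x, g x ∂ν) :
    dualMeasure branch φ ν = ENNReal.ofReal lam • ν := by
  have ofReal_integral {g : M → ℝ} (hg : Continuous g) (h0 : 0 ≤ g) :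
      ENNReal.ofReal (∫ x, g x ∂ν) = ∫⁻ x, ENNReal.ofReal (g x) ∂ν :=
    ofReal_integral_eq_lintegral_ofReal
      (hg.integrable_of_hasCompactSupport (.of_compactSpace g)) (ae_of_all _ h0)
  have := ν.smul_finite (ENNReal.ofReal_ne_top (r := lam))
  refine (ext_of_forall_lintegral_eq_of_IsFiniteMeasure fun g => ?_).symm
  set G : M → ℝ := fun x => g x
  have hG : Continuous G := NNReal.continuous_coe.comp g.continuous
  have hTG : Continuous fun x => ∑ i, Real.exp (φ (branch i x)) * G (branch i x) := by fun_prop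
  have hTG0 : 0 ≤ fun x => ∑ i, Real.exp (φ (branch i x)) * G (branch i x) := fun x =>
    Finset.sum_nonneg fun i _ => mul_nonneg (Real.exp_nonneg _) (g _).coe_nonneg
  calc ∫⁻ x, g x ∂(ENNReal.ofReal lam • ν)
      = ENNReal.ofReal (lam * ∫ x, G x ∂ν) := by
        rw [lintegral_smul_measure, ENNReal.ofReal_mul hlam,
          ofReal_integral hG fun x => (g x).coe_nonneg]
        simp [G]
    _ = ∫⁻ x, ENNReal.ofReal (∑ i, Real.exp (φ (branch i x)) * G (branch i x)) ∂ν := by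
        rw [← heig G hG, ofReal_integral hTG hTG0]
    _ = ∫⁻ y, g y ∂dualMeasure branch φ ν := by
        rw [lintegral_dualMeasure (fun i => (hb i).measurable) hφ.measurable ν
          g.continuous.measurable.coe_nnreal_ennreal]
        refine lintegral_congr fun x => ?_
        rw [ENNReal.ofReal_sum_of_nonneg fun i _ =>
          mul_nonneg (Real.exp_nonneg _) (g _).coe_nonneg]
        simp [ENNReal.ofReal_mul (Real.exp_nonneg _)]

theorem measure_image_eq_lintegral {f : M → M} {branch : Fin k → M → M}
    (hbr : ∀ i x, f (branch i x) = x) (hfiber : ∀ x y, f y = x → ∃ i, branch i x = y)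
    (hinj : ∀ x, Injective fun i => branch i x) (hb : ∀ i, Measurable (branch i))
    {φ : M → ℝ} (hφ : Measurable φ) {ν : Measure M} {c : ℝ≥0∞}
    (hdual : dualMeasure branch φ ν = c • ν) {A : Set M} (hA : MeasurableSet A)
    (hAinj : Set.InjOn f A) :
    ν (f '' A) = c * ∫⁻ x in A, ENNReal.ofReal (Real.exp (-φ x)) ∂ν := by
  have himage : MeasurableSet (f '' A) := by
    rw [image_eq_iUnion_preimage_branch hbr hfiber]
    exact .iUnion fun i => hA.preimage (hb i)
  set g := A.indicator fun y => ENNReal.ofReal (Real.exp (-φ y))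
  have hg : Measurable g := Measurable.indicator (by fun_prop) hA
  have hcancel (y : M) : ENNReal.ofReal (Real.exp (φ y)) * g y = A.indicator 1 y := by
    by_cases hy : y ∈ A
    · simp [g, hy, ← ENNReal.ofReal_mul (Real.exp_nonneg _), ← Real.exp_add]
    · simp [g, hy]
  calc ν (f '' A) = ∫⁻ x, (f '' A).indicator 1 x ∂ν := (lintegral_indicator_one himage).symm
    _ = ∫⁻ x, ∑ i, ENNReal.ofReal (Real.exp (φ (branch i x))) * g (branch i x) ∂ν := by
        simp only [hcancel, sum_indicator_branch_eq_indicator_image hbr hfiber hinj hAinj]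
    _ = c * ∫⁻ x in A, ENNReal.ofReal (Real.exp (-φ x)) ∂ν := by
        rw [← lintegral_dualMeasure hb hφ ν hg, hdual, lintegral_smul_measure,
          lintegral_indicator hA]
        rfl

end TransferOperator

open TransferOperator

theorem jacobian_of_eigenmeasure_general
    {M : Type*} [MetricSpace M] [CompactSpace M] [MeasurableSpace M] [BorelSpace M]
    (f : M → M) (k : ℕ)
    (branch : Fin k → M → M) (hbc : ∀ i, Continuous (branch i))
    (hbr : ∀ i x, f (branch i x) = x)
    (hfiber : ∀ x y, f y = x → ∃ i, branch i x = y)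
    (hinj : ∀ x, Function.Injective (fun i => branch i x))
    (φ : M → ℝ) (hφ : Continuous φ)
    (ν : Measure M) [IsProbabilityMeasure ν]
    (lam : ℝ) (hlam : 0 < lam)
    (heig : ∀ g : M → ℝ, Continuous g →
      ∫ x, (∑ i : Fin k, Real.exp (φ (branch i x)) * g (branch i x)) ∂ν
        = lam * ∫ x, g x ∂ν) :
    ∀ A : Set M, MeasurableSet A → Set.InjOn f A →
      (ν (f '' A)).toReal = ∫ x in A, lam * Real.exp (-φ x) ∂ν := by
  intro A hA hAinj
  have hdual := dualMeasure_eq_smul hbc hφ ν hlam.le heig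
  rw [measure_image_eq_lintegral hbr hfiber hinj (fun i => (hbc i).measurable) hφ.measurable
      hdual hA hAinj, ENNReal.toReal_mul, ENNReal.toReal_ofReal hlam.le, integral_const_mul,
    integral_eq_lintegral_of_nonneg_ae (ae_of_all _ fun x => (Real.exp_pos _).le)
      (by fun_prop : Continuous fun x => Real.exp (-φ x)).aestronglyMeasurable]

theorem jacobian_of_eigenmeasure
    {M : Type*} [MetricSpace M] [CompactSpace M] [MeasurableSpace M] [BorelSpace M]
    (f : M → M) (hf : Continuous f) (k : ℕ) (hk : 0 < k)
    (branch : Fin k → M → M) (hbc : ∀ i, Continuous (branch i))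
    (hbr : ∀ i x, f (branch i x) = x)
    (hfiber : ∀ x y, f y = x → ∃ i, branch i x = y)
    (hinj : ∀ x, Function.Injective (fun i => branch i x))
    (φ : M → ℝ) (hφ : Continuous φ)
    (ν : Measure M) [IsProbabilityMeasure ν]
    (lam : ℝ) (hlam : 0 < lam)
    (heig : ∀ g : M → ℝ, Continuous g →
      ∫ x, (∑ i : Fin k, Real.exp (φ (branch i x)) * g (branch i x)) ∂ν
        = lam * ∫ x, g x ∂ν) :
    ∀ A : Set M, MeasurableSet A → Set.InjOn f A →
      (ν (f '' A)).toReal = ∫ x in A, lam * Real.exp (-φ x) ∂ν :=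
  jacobian_of_eigenmeasure_general f k branch hbc hbr hfiber hinj φ hφ ν lam hlam heig
end

section
/- Suppose a probability measure ν assigns to each cylinder of length n measure at most e^{−κn}, and the number of 'bad' n-cylinders (those whose itinerary visits the first q symbols in a fraction > γ of times) grows at exponential rate c_γ < κ. Then for ν-almost every point x, limsup_{n→∞} (1/n)·#{0 ≤ j < n : f^j(x) ∈ B} ≤ γ, where B is the union of the first q partition atoms. -/
open scoped Classical

open MeasureTheory Filter Finset

theorem borel_cantelli_visit_frequency
    {M : Type*} [MeasurableSpace M]
    (p q : ℕ) (hp : 0 < p) (hq : 0 < q)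
    (f : M → M) (B : Set M)
    (ι : M → ℕ → Fin (p + q))
    (hit : ∀ x j, f^[j] x ∈ B ↔ (ι x j : ℕ) < q)
    (ν : Measure M) [IsProbabilityMeasure ν]
    (γ : ℝ) (hγ : γ ∈ Set.Ioo (0 : ℝ) 1)
    (κ cγ : ℝ) (hκγ : cγ < κ)
    -- each n-cylinder has ν-measure at most e^{-κ n}
    (hcyl : ∀ (n : ℕ) (w : Fin n → Fin (p + q)),
      ν {x | ∀ j : Fin n, ι x (j : ℕ) = w j} ≤ ENNReal.ofReal (Real.exp (-(κ * n))))
    -- the number of bad n-cylinders grows at exponential rate at most cγ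
    (hcount : ∃ C : ℝ, 0 < C ∧ ∀ n : ℕ,
      ((Finset.univ.filter (fun w : Fin n → Fin (p + q) =>
          γ * n < ((Finset.univ.filter (fun j : Fin n => (w j : ℕ) < q)).card : ℝ))).card : ℝ)
        ≤ C * Real.exp (cγ * n)) :
    ∀ᵐ x ∂ν, Filter.atTop.limsup
        (fun n : ℕ =>
          (((Finset.range n).filter (fun j => f^[j] x ∈ B)).card : ℝ) / n) ≤ γ := by
  obtain ⟨C, hC, hcount⟩ := hcount
  obtain ⟨hγ0, hγ1⟩ := hγ
  set A : ℕ → Set M := fun n =>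
    {x | γ * n < ((Finset.univ.filter (fun j : Fin n => (ι x (j : ℕ) : ℕ) < q)).card : ℝ)}
    with hA
  -- measure bound for A n
  have hAmeas : ∀ n : ℕ, ν (A n) ≤ ENNReal.ofReal (C * Real.exp ((cγ - κ) * n)) := by
    intro n
    set S : Finset (Fin n → Fin (p + q)) :=
      Finset.univ.filter (fun w : Fin n → Fin (p + q) =>
        γ * n < ((Finset.univ.filter (fun j : Fin n => (w j : ℕ) < q)).card : ℝ)) with hS
    have hsub : A n ⊆ ⋃ w ∈ S, {x | ∀ j : Fin n, ι x (j : ℕ) = w j} := by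
      intro x hx
      rw [Set.mem_iUnion₂]
      refine ⟨fun j : Fin n => ι x (j : ℕ), ?_, fun j => rfl⟩
      simp only [hS, Finset.mem_filter, Finset.mem_univ, true_and]
      exact hx
    calc ν (A n) ≤ ν (⋃ w ∈ S, {x | ∀ j : Fin n, ι x (j : ℕ) = w j}) :=
          measure_mono hsub
      _ ≤ ∑ w ∈ S, ν {x | ∀ j : Fin n, ι x (j : ℕ) = w j} := measure_biUnion_finset_le _ _
      _ ≤ ∑ _w ∈ S, ENNReal.ofReal (Real.exp (-(κ * n))) :=
          Finset.sum_le_sum fun w _ => hcyl n w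
      _ = (S.card : ENNReal) * ENNReal.ofReal (Real.exp (-(κ * n))) := by
          rw [Finset.sum_const, nsmul_eq_mul]
      _ ≤ ENNReal.ofReal (C * Real.exp (cγ * n)) * ENNReal.ofReal (Real.exp (-(κ * n))) := by
          gcongr
          rw [show ((S.card : ENNReal)) = ENNReal.ofReal (S.card : ℝ) by
            simp [ENNReal.ofReal_natCast]]
          exact ENNReal.ofReal_le_ofReal (hcount n)
      _ = ENNReal.ofReal (C * Real.exp ((cγ - κ) * n)) := by
          rw [← ENNReal.ofReal_mul (by positivity)]
          congr 1
          rw [mul_assoc, ← Real.exp_add]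
          ring_nf
  -- summability
  have hsum : (∑' n, ν (A n)) ≠ ⊤ := by
    have hsummable : Summable (fun n : ℕ => C * Real.exp ((cγ - κ) * n)) := by
      have : Summable (fun n : ℕ => (Real.exp (cγ - κ)) ^ n) :=
        summable_geometric_of_lt_one (le_of_lt (Real.exp_pos _))
          (Real.exp_lt_one_iff.2 (by linarith))
      simpa [← Real.exp_nat_mul, mul_comm] using this.mul_left C
    have h1 : (∑' n : ℕ, ν (A n)) ≤ ∑' n : ℕ, ENNReal.ofReal (C * Real.exp ((cγ - κ) * n)) :=
      ENNReal.tsum_le_tsum hAmeas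
    have h2 : (∑' n : ℕ, ENNReal.ofReal (C * Real.exp ((cγ - κ) * n))) ≠ ⊤ := by
      rw [← ENNReal.ofReal_tsum_of_nonneg (fun n => by positivity) hsummable]
      exact ENNReal.ofReal_ne_top
    exact ne_top_of_le_ne_top h2 h1
  filter_upwards [ae_eventually_notMem hsum] with x hx
  -- translate: counts agree
  have hcard : ∀ n : ℕ, (((Finset.range n).filter (fun j => f^[j] x ∈ B)).card : ℝ)
      = ((Finset.univ.filter (fun j : Fin n => (ι x (j : ℕ) : ℕ) < q)).card : ℝ) := by
    intro n
    congr 1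
    have heq : (Finset.range n).filter (fun j => f^[j] x ∈ B)
        = (Finset.range n).filter (fun j => (ι x j : ℕ) < q) :=
      Finset.filter_congr (fun j _ => hit x j)
    rw [heq, Finset.card_filter, Finset.card_filter, ← Fin.sum_univ_eq_sum_range]
  have hev : ∀ᶠ n : ℕ in atTop,
      (((Finset.range n).filter (fun j => f^[j] x ∈ B)).card : ℝ) / n ≤ γ := by
    filter_upwards [hx, eventually_ge_atTop 1] with n hn hn1
    have hnotA : ¬ (γ * n < ((Finset.univ.filter
        (fun j : Fin n => (ι x (j : ℕ) : ℕ) < q)).card : ℝ)) := hn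
    push_neg at hnotA
    rw [hcard n, div_le_iff₀ (by exact_mod_cast hn1)]
    linarith [hnotA]
  refine limsup_le_of_le ?_ hev
  exact isCoboundedUnder_le_of_le atTop (x := 0) (fun n => by positivity)
end

section
/- Under the same backward-contraction hypothesis along a hyperbolic time n, if J_ν f = λ·e^{−φ} with φ α-Hölder, then the distortion of the Jacobian of f^n is bounded: K^{−1} ≤ (J_ν f^n(x))/(J_ν f^n(y)) ≤ K for all x, y in the hyperbolic cylinder, where K = e^{A·D^α}, D being the diameter bound of partition atoms and A the Hölder–distortion constant from the Birkhoff sum estimate. -/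
open Real

lemma exp_sub_mem_of_abs_sub_le {s t K : ℝ} (h : |s - t| ≤ K) :
    (exp K)⁻¹ ≤ exp (s - t) ∧ exp (s - t) ≤ exp K := by
  obtain ⟨hlow, hup⟩ := abs_le.1 h
  rw [← exp_neg]
  exact ⟨exp_le_exp.2 hlow, exp_le_exp.2 hup⟩

lemma mul_exp_neg_div_mul_exp_neg {a : ℝ} (ha : a ≠ 0) (s t : ℝ) :
    a * exp (-s) / (a * exp (-t)) = exp (t - s) := by
  rw [mul_div_mul_left _ _ ha, ← exp_sub, neg_sub_neg]

theorem jacobian_distortion_hyperbolic_cylinder_general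
    {M : Type*} [MetricSpace M]
    (f : M → M) (φ : M → ℝ)
    (α A D lam : ℝ) (hα : 0 < α)
    (hA : 0 ≤ A) (hlam : 0 < lam)
    (n : ℕ) (Rn : Set M)
    -- Birkhoff-sum Hölder distortion estimate on the cylinder
    (hS : ∀ x ∈ Rn, ∀ y ∈ Rn,
      |(∑ j ∈ Finset.range n, φ (f^[j] x)) - (∑ j ∈ Finset.range n, φ (f^[j] y))|
        ≤ A * dist (f^[n] x) (f^[n] y) ^ α)
    -- D bounds the diameter of the partition atoms
    (hdiam : ∀ x ∈ Rn, ∀ y ∈ Rn, dist (f^[n] x) (f^[n] y) ≤ D)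
    -- the Jacobian of f^n with respect to ν
    (Jn : M → ℝ)
    (hJn : ∀ x, Jn x = lam ^ n * Real.exp (-(∑ j ∈ Finset.range n, φ (f^[j] x)))) :
    ∀ x ∈ Rn, ∀ y ∈ Rn,
      (Real.exp (A * D ^ α))⁻¹ ≤ Jn x / Jn y ∧ Jn x / Jn y ≤ Real.exp (A * D ^ α) := by
  intro x hx y hy
  have hJ : ∀ z, Jn z = lam ^ n * exp (-birkhoffSum f φ n z) := hJn
  have hdist : |birkhoffSum f φ n y - birkhoffSum f φ n x| ≤ A * D ^ α := by
    rw [abs_sub_comm]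
    calc |birkhoffSum f φ n x - birkhoffSum f φ n y|
        ≤ A * dist (f^[n] x) (f^[n] y) ^ α := hS x hx y hy
      _ ≤ A * D ^ α := by gcongr; exact hdiam x hx y hy
  rw [hJ, hJ, mul_exp_neg_div_mul_exp_neg (pow_ne_zero n hlam.ne')]
  exact exp_sub_mem_of_abs_sub_le hdist

theorem jacobian_distortion_hyperbolic_cylinder
    {M : Type*} [MetricSpace M]
    (f : M → M) (φ : M → ℝ)
    (α c C A D lam : ℝ) (hα : 0 < α) (hc : 0 < c) (hC : 0 < C)
    (hA : 0 ≤ A) (hD : 0 ≤ D) (hlam : 0 < lam)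
    (n : ℕ) (Rn : Set M)
    -- backward exponential contraction along the hyperbolic cylinder
    (hcontr : ∀ x ∈ Rn, ∀ y ∈ Rn, ∀ j : ℕ, j ≤ n →
      dist (f^[n - j] x) (f^[n - j] y)
        ≤ C * Real.exp (-(j : ℝ) * c) * dist (f^[n] x) (f^[n] y))
    -- Birkhoff-sum Hölder distortion estimate on the cylinder
    (hS : ∀ x ∈ Rn, ∀ y ∈ Rn,
      |(∑ j ∈ Finset.range n, φ (f^[j] x)) - (∑ j ∈ Finset.range n, φ (f^[j] y))|
        ≤ A * dist (f^[n] x) (f^[n] y) ^ α)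
    -- D bounds the diameter of the partition atoms
    (hdiam : ∀ x ∈ Rn, ∀ y ∈ Rn, dist (f^[n] x) (f^[n] y) ≤ D)
    -- the Jacobian of f^n with respect to ν
    (Jn : M → ℝ)
    (hJn : ∀ x, Jn x = lam ^ n * Real.exp (-(∑ j ∈ Finset.range n, φ (f^[j] x)))) :
    ∀ x ∈ Rn, ∀ y ∈ Rn,
      (Real.exp (A * D ^ α))⁻¹ ≤ Jn x / Jn y ∧ Jn x / Jn y ≤ Real.exp (A * D ^ α) :=
  jacobian_distortion_hyperbolic_cylinder_general f φ α A D lam hα hA hlam n Rn hS hdiam Jn hJn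
end
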